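/- arXiv:2202.00327 — 4 statements merged into one kernel-verified Lean document; each statement's English description precedes it below -/
import Mathlib

section
/- Let a₁, b₁, a₂, b₂ be real numbers and consider the monic quadratic polynomial P(μ) = μ² + (a₁ + i b₁) μ + (a₂ + i b₂) over ℂ. Then every root μ ∈ ℂ of P satisfies Im(μ) > 0 (equivalently Re(iμ) < 0) if and only if b₁ < 0 and a₁ b₁ b₂ − a₂ b₁² − b₂² > 0. -/
open Complex

/-- Routh–Hurwitz criterion for a monic quadratic with complex coefficients:
every root `μ` of `μ² + (a₁ + i b₁) μ + (a₂ + i b₂)` satisfies `Im(μ) > 0`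
(equivalently `Re(iμ) < 0`) iff `b₁ < 0` and `a₁ b₁ b₂ - a₂ b₁² - b₂² > 0`. -/
theorem routh_hurwitz_quadratic (a₁ b₁ a₂ b₂ : ℝ) :
    (∀ μ : ℂ, μ ^ 2 + ((a₁ : ℂ) + (b₁ : ℂ) * Complex.I) * μ + ((a₂ : ℂ) + (b₂ : ℂ) * Complex.I) = 0
        → 0 < μ.im) ↔
    (b₁ < 0 ∧ 0 < a₁ * b₁ * b₂ - a₂ * b₁ ^ 2 - b₂ ^ 2) := by
  set s : ℂ := (a₁ : ℂ) + (b₁ : ℂ) * Complex.I with hs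
  set p : ℂ := (a₂ : ℂ) + (b₂ : ℂ) * Complex.I with hp
  constructor
  · intro h
    obtain ⟨w, hw⟩ := IsAlgClosed.exists_pow_nat_eq (s ^ 2 - 4 * p) (n := 2) (by norm_num)
    set μ₁ : ℂ := (-s + w) / 2 with hμ₁
    set μ₂ : ℂ := (-s - w) / 2 with hμ₂
    have h1 : 0 < μ₁.im := h μ₁ (by rw [hμ₁]; linear_combination hw / 4)
    have h2 : 0 < μ₂.im := h μ₂ (by rw [hμ₂]; linear_combination hw / 4)
    have hsum : μ₁ + μ₂ = -s := by rw [hμ₁, hμ₂]; ring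
    have hprod : μ₁ * μ₂ = p := by rw [hμ₁, hμ₂]; linear_combination -hw / 4
    have e1 : μ₁.re + μ₂.re = -a₁ := by
      have := congrArg Complex.re hsum
      simpa [hs] using this
    have e2 : μ₁.im + μ₂.im = -b₁ := by
      have := congrArg Complex.im hsum
      simpa [hs] using this
    have e3 : μ₁.re * μ₂.re - μ₁.im * μ₂.im = a₂ := by
      have := congrArg Complex.re hprod
      simpa [hp, Complex.mul_re] using this
    have e4 : μ₁.re * μ₂.im + μ₁.im * μ₂.re = b₂ := by
      have := congrArg Complex.im hprod
      simpa [hp, Complex.mul_im] using this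
    constructor
    · linarith
    · have key : a₁ * b₁ * b₂ - a₂ * b₁ ^ 2 - b₂ ^ 2 =
          μ₁.im * μ₂.im * ((μ₁.re - μ₂.re) ^ 2 + (μ₁.im + μ₂.im) ^ 2) := by
        have f1 : a₁ = -(μ₁.re + μ₂.re) := by linarith
        have f2 : b₁ = -(μ₁.im + μ₂.im) := by linarith
        have f3 : a₂ = μ₁.re * μ₂.re - μ₁.im * μ₂.im := e3.symm
        have f4 : b₂ = μ₁.re * μ₂.im + μ₁.im * μ₂.re := e4.symm
        rw [f1, f2, f3, f4]; ring
      rw [key]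
      have hK : 0 < (μ₁.re - μ₂.re) ^ 2 + (μ₁.im + μ₂.im) ^ 2 := by positivity
      exact mul_pos (mul_pos h1 h2) hK
  · rintro ⟨hb1, hD⟩ μ hμ
    set ν : ℂ := -s - μ with hν
    have hprod : μ * ν = p := by rw [hν]; linear_combination -hμ
    have e2 : μ.im + ν.im = -b₁ := by
      simp [hν, hs]
    have e1 : μ.re + ν.re = -a₁ := by
      simp [hν, hs]
    have e3 : μ.re * ν.re - μ.im * ν.im = a₂ := by
      have := congrArg Complex.re hprod
      simpa [hp, Complex.mul_re] using this
    have e4 : μ.re * ν.im + μ.im * ν.re = b₂ := by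
      have := congrArg Complex.im hprod
      simpa [hp, Complex.mul_im] using this
    have key : a₁ * b₁ * b₂ - a₂ * b₁ ^ 2 - b₂ ^ 2 =
        μ.im * ν.im * ((μ.re - ν.re) ^ 2 + (μ.im + ν.im) ^ 2) := by
      have f1 : a₁ = -(μ.re + ν.re) := by linarith
      have f2 : b₁ = -(μ.im + ν.im) := by linarith
      have f3 : a₂ = μ.re * ν.re - μ.im * ν.im := e3.symm
      have f4 : b₂ = μ.re * ν.im + μ.im * ν.re := e4.symm
      rw [f1, f2, f3, f4]; ring
    rw [key] at hD
    have hsum : 0 < μ.im + ν.im := by linarith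
    have hyy : 0 < μ.im * ν.im := by
      by_contra hle
      push_neg at hle
      nlinarith [sq_nonneg (μ.re - ν.re), sq_nonneg (μ.im + ν.im)]
    nlinarith
end

section
/- Let τ > 0, T > 0, k > 0, and b ∈ ℝ. Then every complex root X of the quadratic equation X² − 4iτT k² X − T k² (1 − iτ b) = 0 satisfies Im(X) > 0 if and only if b² < 16 T k². Consequently, writing X = −ω + b, every admissible frequency ω ∈ ℂ satisfies Im(ω) < 0 (linear stability of the perturbation mode) if and only if b² < 16 T k². -/
open Complex

/-- Stability criterion for the characteristic equation
`X² - 4iτTk²X - Tk²(1 - iτb) = 0`: every root has `Im(X) > 0` iff `b² < 16Tk²`.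
Equivalently, with `X = -ω + b`, every admissible frequency `ω` satisfies
`Im(ω) < 0` iff `b² < 16Tk²`. -/
theorem stability_criterion_characteristic_equation
    (τ T k b : ℝ) (hτ : 0 < τ) (hT : 0 < T) (hk : 0 < k) :
    ((∀ X : ℂ,
        X ^ 2 - 4 * Complex.I * τ * T * k ^ 2 * X - T * k ^ 2 * (1 - Complex.I * τ * b) = 0
        → 0 < X.im) ↔ b ^ 2 < 16 * T * k ^ 2) ∧
    ((∀ ω : ℂ,
        (-ω + (b : ℂ)) ^ 2 - 4 * Complex.I * τ * T * k ^ 2 * (-ω + (b : ℂ))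
            - T * k ^ 2 * (1 - Complex.I * τ * b) = 0
        → ω.im < 0) ↔ b ^ 2 < 16 * T * k ^ 2) := by
  obtain ⟨A, hAdef⟩ : ∃ A : ℝ, A = T * k ^ 2 := ⟨_, rfl⟩
  obtain ⟨S, hSdef⟩ : ∃ S : ℝ, S = 2 * τ * A := ⟨_, rfl⟩
  have hA : (0:ℝ) < A := by rw [hAdef]; positivity
  have hS : 0 < S := by rw [hSdef]; positivity
  obtain ⟨s, hs⟩ : ∃ s : ℂ, s ^ 2 = ((S ^ 2 - A : ℝ) + (τ * b * A : ℝ) * Complex.I) :=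
    IsAlgClosed.exists_pow_nat_eq _ (by norm_num)
  -- real and imaginary parts of the square-root equation
  have hre : s.re ^ 2 - s.im ^ 2 = S ^ 2 - A := by
    have := congrArg Complex.re hs
    simp [pow_two, Complex.mul_re, Complex.add_re, Complex.ofReal_re, Complex.ofReal_im,
      Complex.mul_im] at this
    nlinarith [this]
  have him : 2 * (s.re * s.im) = τ * b * A := by
    have := congrArg Complex.im hs
    simp [pow_two, Complex.mul_im, Complex.add_im, Complex.ofReal_re, Complex.ofReal_im,
      Complex.mul_re] at this
    nlinarith [this]
  -- factorization of the characteristic polynomial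
  have hfac : ∀ X : ℂ,
      X ^ 2 - 4 * Complex.I * τ * T * k ^ 2 * X - T * k ^ 2 * (1 - Complex.I * τ * b)
        = (X - Complex.I * ((S:ℂ) + s)) * (X - Complex.I * ((S:ℂ) - s)) := by
    intro X
    have h1 : (X - Complex.I * ((S:ℂ) + s)) * (X - Complex.I * ((S:ℂ) - s))
        = X ^ 2 - 2 * Complex.I * (S:ℂ) * X + Complex.I ^ 2 * ((S:ℂ) ^ 2 - s ^ 2) := by
      ring
    rw [h1, Complex.I_sq, hs, hSdef, hAdef]
    push_cast
    ring
  -- the key real inequality equivalence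
  have key : s.re ^ 2 < S ^ 2 ↔ b ^ 2 < 16 * A := by
    have him2 : (τ * b * A) ^ 2 = 4 * (s.re ^ 2 * s.im ^ 2) := by rw [← him]; ring
    have ht2 : 0 < τ ^ 2 * A ^ 2 := by positivity
    constructor
    · intro hr2
      have hm : s.im ^ 2 < A := by linarith
      have hrm : s.re ^ 2 * s.im ^ 2 < S ^ 2 * A := by
        calc s.re ^ 2 * s.im ^ 2 ≤ S ^ 2 * s.im ^ 2 := by nlinarith [sq_nonneg s.im]
          _ < S ^ 2 * A := by nlinarith [hS]
      have hSA : S ^ 2 = 4 * τ ^ 2 * A ^ 2 := by rw [hSdef]; ring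
      nlinarith [hrm, him2, ht2]
    · intro hb
      by_contra hcon
      push_neg at hcon
      have hm : A ≤ s.im ^ 2 := by linarith
      have hrm : S ^ 2 * A ≤ s.re ^ 2 * s.im ^ 2 := by
        calc S ^ 2 * A ≤ s.re ^ 2 * A := by nlinarith [hA]
          _ ≤ s.re ^ 2 * s.im ^ 2 := by nlinarith [sq_nonneg s.re]
      have hSA : S ^ 2 = 4 * τ ^ 2 * A ^ 2 := by rw [hSdef]; ring
      nlinarith [hrm, him2, ht2]
  -- first equivalence
  have main : (∀ X : ℂ,
      X ^ 2 - 4 * Complex.I * τ * T * k ^ 2 * X - T * k ^ 2 * (1 - Complex.I * τ * b) = 0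
      → 0 < X.im) ↔ b ^ 2 < 16 * T * k ^ 2 := by
    constructor
    · intro H
      have h1 : 0 < (Complex.I * ((S:ℂ) + s)).im := H _ (by rw [hfac]; ring)
      have h2 : 0 < (Complex.I * ((S:ℂ) - s)).im := H _ (by rw [hfac]; ring)
      simp [Complex.mul_im, Complex.add_im, Complex.add_re, Complex.sub_im,
        Complex.sub_re, Complex.ofReal_re, Complex.ofReal_im] at h1 h2
      have : s.re ^ 2 < S ^ 2 := by nlinarith [h1, h2]
      have := key.mp this
      rw [hAdef] at this
      linarith
    · intro hb X hX
      have hb' : b ^ 2 < 16 * A := by rw [hAdef]; linarith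
      have hr2 : s.re ^ 2 < S ^ 2 := key.mpr hb'
      rw [hfac] at hX
      rcases mul_eq_zero.mp hX with h | h
      · have hXe : X = Complex.I * ((S:ℂ) + s) := by linear_combination h
        rw [hXe]
        simp [Complex.mul_im, Complex.add_re, Complex.ofReal_re]
        nlinarith [hr2, hS]
      · have hXe : X = Complex.I * ((S:ℂ) - s) := by linear_combination h
        rw [hXe]
        simp [Complex.mul_im, Complex.sub_re, Complex.ofReal_re]
        nlinarith [hr2, hS]
  refine ⟨main, ?_⟩
  rw [← main]
  constructor
  · intro H X hX
    have e : -((b:ℂ) - X) + (b:ℂ) = X := by ring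
    have h := H ((b:ℂ) - X) (by rw [e]; exact hX)
    simp [Complex.sub_im, Complex.ofReal_im] at h
    linarith
  · intro H ω hω
    have h := H (-ω + (b:ℂ)) hω
    simp [Complex.add_im, Complex.neg_im, Complex.ofReal_im] at h
    linarith
end

section
/- Let τ > 0, T > 0, u₀ ∈ ℝ with u₀² < 16 T. Then for every wavenumber k > 0 and every angle θ ∈ ℝ, every complex root X of X² − 4iτT k² X − T k² (1 − iτ k u₀ cos θ) = 0 satisfies Im(X) > 0; hence every admissible frequency ω = k u₀ cos θ − X satisfies Im(ω) < 0. In other words, for flow speeds below four times the sound speed √T (Mach number less than 4), the hybrid continuum–kinetic model is linearly stable for all wave directions. -/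
open Complex

/-- Linear stability of the hybrid model for subsonic and mildly supersonic flows:
if `u₀² < 16T` (Mach number less than 4), then for every wavenumber `k > 0` and every
angle `θ`, every root `X` of the characteristic equation satisfies `Im(X) > 0`, hence
the frequency `ω = k u₀ cos θ - X` satisfies `Im(ω) < 0`. -/
theorem hybrid_model_stable_below_mach_four
    (τ T u₀ : ℝ) (hτ : 0 < τ) (hT : 0 < T) (hu : u₀ ^ 2 < 16 * T) :
    ∀ (k θ : ℝ), 0 < k → ∀ X : ℂ,
      X ^ 2 - 4 * Complex.I * τ * T * k ^ 2 * X
          - T * k ^ 2 * (1 - Complex.I * τ * (k * u₀ * Real.cos θ)) = 0 →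
      0 < X.im ∧ (((k * u₀ * Real.cos θ : ℝ) : ℂ) - X).im < 0 := by
  intro k θ hk X hX
  have hc : (Real.cos θ) ^ 2 ≤ 1 := Real.cos_sq_le_one θ
  obtain ⟨c, hcdef⟩ : ∃ c : ℝ, Real.cos θ = c := ⟨_, rfl⟩
  rw [hcdef] at hX hc ⊢
  rw [Complex.ext_iff] at hX
  obtain ⟨h1, h2⟩ := hX
  simp [pow_two, Complex.mul_re, Complex.mul_im] at h1 h2
  set a := X.re with ha
  set b := X.im with hb
  have hbpos : 0 < b := by
    by_contra hble
    push_neg at hble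
    have hA : 0 < τ * T * k ^ 2 := by positivity
    set A := τ * T * k ^ 2 with hAdef
    -- from h2 : (4A - 2b) * a = A * k * u₀ * c
    have he : (4 * A - 2 * b) * a = A * k * u₀ * c := by
      rw [hAdef]; ring_nf; ring_nf at h2; linarith
    have he2 : ((4 * A - 2 * b) * a) ^ 2 = (A * k * u₀ * c) ^ 2 := by rw [he]
    have h3 : 16 * A ^ 2 ≤ (4 * A - 2 * b) ^ 2 := by nlinarith [mul_nonneg hA.le (neg_nonneg.mpr hble), sq_nonneg b]
    have h4 : T * k ^ 2 ≤ a ^ 2 := by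
      have : 0 ≤ A * (-b) := mul_nonneg hA.le (neg_nonneg.mpr hble)
      rw [hAdef] at *
      nlinarith [sq_nonneg b]
    have h5 : 16 * A ^ 2 * (T * k ^ 2) ≤ (4 * A - 2 * b) ^ 2 * a ^ 2 :=
      mul_le_mul h3 h4 (by positivity) (sq_nonneg _)
    have h6 : (A * k * u₀ * c) ^ 2 ≤ A ^ 2 * k ^ 2 * u₀ ^ 2 := by
      nlinarith [mul_nonneg (sq_nonneg (A * k * u₀)) (sub_nonneg.mpr hc)]
    have h7 : A ^ 2 * k ^ 2 * u₀ ^ 2 < 16 * A ^ 2 * (T * k ^ 2) := by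
      have hp : 0 < A ^ 2 * k ^ 2 := by positivity
      nlinarith [mul_lt_mul_of_pos_left hu hp]
    rw [← mul_pow] at h5
    linarith [he2, h5, h6, h7]
  refine ⟨hbpos, ?_⟩
  simp [hb]
  linarith
end

section
/- Let τ > 0, T > 0, u₀ ∈ ℝ with u₀² > 16 T, and let θ ∈ ℝ satisfy cos²θ > 16T/u₀². Then for every wavenumber k > 0 there exists a complex root X of X² − 4iτT k² X − T k² (1 − iτ k u₀ cos θ) = 0 with Im(X) < 0; hence the corresponding frequency ω = k u₀ cos θ − X satisfies Im(ω) > 0, i.e. the mode is linearly unstable. Thus for hypersonic flows (u₀² > 16T) the model is unstable for waves propagating in directions close to the direction of the unperturbed velocity. -/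
open Complex

set_option maxHeartbeats 1000000 in
/-- Linear instability of the hybrid model for hypersonic flows: if `u₀² > 16T` and the
wave direction satisfies `cos²θ > 16T/u₀²`, then for every wavenumber `k > 0` there is a
root `X` of the characteristic equation with `Im(X) < 0`, i.e. the corresponding frequency
`ω = k u₀ cos θ - X` satisfies `Im(ω) > 0` and the mode is linearly unstable. -/
theorem hybrid_model_unstable_hypersonic
    (τ T u₀ θ : ℝ) (hτ : 0 < τ) (hT : 0 < T)
    (hu : 16 * T < u₀ ^ 2) (hθ : 16 * T / u₀ ^ 2 < Real.cos θ ^ 2) :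
    ∀ k : ℝ, 0 < k → ∃ X : ℂ,
      X ^ 2 - 4 * Complex.I * τ * T * k ^ 2 * X
          - T * k ^ 2 * (1 - Complex.I * τ * (k * u₀ * Real.cos θ)) = 0 ∧
      X.im < 0 ∧ 0 < (((k * u₀ * Real.cos θ : ℝ) : ℂ) - X).im := by
  intro k hk
  set c := Real.cos θ with hc_def
  have hu2 : 0 < u₀ ^ 2 := by linarith
  have hc2 : 16 * T < u₀ ^ 2 * c ^ 2 := by
    have := (div_lt_iff₀ hu2).mp hθ
    linarith
  set a := τ * T * k ^ 2 with ha_def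
  have ha : 0 < a := by rw [ha_def]; positivity
  set zr := T * k ^ 2 - 4 * a ^ 2 with hzr_def
  set zi := -(τ * T * k ^ 3 * u₀ * c) with hzi_def
  have h6 : 0 < τ ^ 2 * T ^ 2 * k ^ 6 := by positivity
  have hkey : 0 < τ ^ 2 * T ^ 2 * k ^ 6 * (u₀ ^ 2 * c ^ 2 - 16 * T) :=
    mul_pos h6 (sub_pos.mpr hc2)
  have hziexp : zi ^ 2 = τ ^ 2 * T ^ 2 * k ^ 6 * (u₀ ^ 2 * c ^ 2) := by
    rw [hzi_def]; ring
  have hcpos : 0 < c ^ 2 := lt_trans (by positivity) hθ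
  have hzi2 : 0 < zi ^ 2 := by
    rw [hziexp]; exact mul_pos h6 (mul_pos hu2 hcpos)
  clear_value a zr zi
  set r := Real.sqrt (zr ^ 2 + zi ^ 2) with hr_def
  have hr2 : r ^ 2 = zr ^ 2 + zi ^ 2 := Real.sq_sqrt (by positivity)
  have hr0 : 0 ≤ r := Real.sqrt_nonneg _
  clear_value r
  have hr_gt : zr < r := by
    have habs : |zr| < r := by
      rw [hr_def, ← Real.sqrt_sq_eq_abs]
      exact Real.sqrt_lt_sqrt (sq_nonneg zr) (by linarith)
    linarith [le_abs_self zr]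
  set q := Real.sqrt ((r - zr) / 2) with hq_def
  have hq2 : q ^ 2 = (r - zr) / 2 := Real.sq_sqrt (by linarith)
  have hq_pos : 0 < q := Real.sqrt_pos.mpr (by linarith)
  clear_value q
  set p := zi / (2 * q) with hp_def
  have hp : 2 * p * q = zi := by
    rw [hp_def]; field_simp
  clear_value p
  have hsq : 4 * p ^ 2 * q ^ 2 = zi ^ 2 := by
    linear_combination (2 * p * q + zi) * hp
  have hp2 : p ^ 2 = (r + zr) / 2 := by
    have h2 : p ^ 2 * (2 * (r - zr)) = ((r + zr) / 2) * (2 * (r - zr)) := by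
      linear_combination hsq - hr2 - 4 * p ^ 2 * hq2
    exact mul_right_cancel₀ (by linarith) h2
  have hpq : p ^ 2 - q ^ 2 = zr := by rw [hp2, hq2]; ring
  -- key inequality: q > 2a
  have hzi2' : 16 * a ^ 2 * (T * k ^ 2) < zi ^ 2 := by
    rw [hziexp, ha_def,
      show 16 * (τ * T * k ^ 2) ^ 2 * (T * k ^ 2) = τ ^ 2 * T ^ 2 * k ^ 6 * (16 * T) by ring]
    exact mul_lt_mul_of_pos_left hc2 h6
  have hTk : 0 < T * k ^ 2 := by positivity
  have hpos : 0 < zr + 8 * a ^ 2 := by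
    rw [hzr_def]; linarith [sq_nonneg a, hTk]
  have hexp : (zr + 8 * a ^ 2) ^ 2 = zr ^ 2 + 16 * a ^ 2 * (T * k ^ 2) := by
    rw [hzr_def]; ring
  have hr_big : zr + 8 * a ^ 2 < r := by
    by_contra h
    push_neg at h
    have hsq' : r ^ 2 ≤ (zr + 8 * a ^ 2) ^ 2 := pow_le_pow_left₀ hr0 h 2
    linarith [hsq'.trans_eq hexp, hr2, hzi2']
  have hq2big : 4 * a ^ 2 < q ^ 2 := by rw [hq2]; linarith
  have hq_big : 2 * a < q := by
    refine lt_of_pow_lt_pow_left₀ 2 hq_pos.le ?_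
    rw [show (2 * a) ^ 2 = 4 * a ^ 2 by ring]; exact hq2big
  -- the root
  refine ⟨⟨-p, 2 * a - q⟩, ?_, by simpa using by linarith, by simp; linarith⟩
  have hX : (⟨-p, 2 * a - q⟩ : ℂ) = -(p : ℂ) + ((2 * a - q : ℝ) : ℂ) * I := by
    apply Complex.ext <;> simp
  rw [hX]
  have ha' : ((a : ℝ) : ℂ) = (τ : ℂ) * T * k ^ 2 := by
    rw [ha_def]; push_cast; ring
  have h1R : p ^ 2 - q ^ 2 = T * k ^ 2 - 4 * (τ * T * k ^ 2) ^ 2 := by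
    rw [hpq, hzr_def, ha_def]
  have h2R : 2 * p * q = -(τ * T * k ^ 3 * u₀ * c) := by rw [hp, hzi_def]
  have h1 : (p : ℂ) ^ 2 - (q : ℂ) ^ 2
      = (T : ℂ) * k ^ 2 - 4 * ((τ : ℂ) * T * k ^ 2) ^ 2 := by
    exact_mod_cast congrArg (Complex.ofReal) h1R
  have h2 : 2 * (p : ℂ) * q = -((τ : ℂ) * T * k ^ 3 * u₀ * c) := by
    exact_mod_cast congrArg (Complex.ofReal) h2R
  have hI : (I : ℂ) ^ 2 = -1 := Complex.I_sq
  push_cast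
  rw [ha']
  linear_combination h1 + I * h2 +
    ((q : ℂ) ^ 2 - 4 * ((τ : ℂ) * T * k ^ 2) ^ 2) * hI
end
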